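/- arXiv:math/0511696 — 5 statements merged into one kernel-verified Lean document; each statement's English description precedes it below -/
import Mathlib

section
/- Let G be a group, I a type, and g a function assigning to each triple (i,j,k) ∈ I × I × I an element g_{ijk} ∈ G, with g_{iij} = 1 and g_{ijj} = 1 for all i,j ∈ I. Consider the product on I × I × G given by (i,j,a) · (j,k,b) := (i,k, g_{ijk} · a · b). Then this product is associative for all composable triples if and only if every g_{ijk} lies in the center Z(G) of G and g satisfies the abelian Čech 2-cocycle identity g_{ijl} · g_{jkl} = g_{ikl} · g_{ijk} for all i,j,k,l ∈ I. -/
/-!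
Taking `a = b = c = 1` in the associativity law gives the cocycle identity verbatim, while
taking `i = j` and `b = c = 1` (where `g i i k = 1`) leaves `g i k l * a = a * g i k l`.
Conversely, once the `g i j k` are central they can be moved past `a` and collected in front,
where the cocycle identity matches the two sides.
-/

section CechProduct

variable {G : Type*} [Group G] {I : Type*} (g : I → I → I → G)

theorem cech_cocycle_of_assoc
    (h : ∀ (i j k l : I) (a b c : G),
      g i k l * (g i j k * a * b) * c = g i j l * a * (g j k l * b * c))
    (i j k l : I) : g i j l * g j k l = g i k l * g i j k := by
  simpa only [mul_one] using (h i j k l 1 1 1).symm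

theorem mem_center_of_assoc (hg : ∀ i j, g i i j = 1)
    (h : ∀ (i j k l : I) (a b c : G),
      g i k l * (g i j k * a * b) * c = g i j l * a * (g j k l * b * c))
    (i k l : I) : g i k l ∈ Subgroup.center G := by
  refine Subgroup.mem_center_iff.mpr fun a => ?_
  simpa only [hg, one_mul, mul_one] using (h i i k l a 1 1).symm

theorem assoc_of_mem_center_of_cech_cocycle (hc : ∀ i j k, g i j k ∈ Subgroup.center G)
    (hco : ∀ i j k l, g i j l * g j k l = g i k l * g i j k)
    (i j k l : I) (a b c : G) :
    g i k l * (g i j k * a * b) * c = g i j l * a * (g j k l * b * c) := by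
  calc g i k l * (g i j k * a * b) * c
      = g i k l * g i j k * (a * b * c) := by simp only [mul_assoc]
    _ = g i j l * (g j k l * a) * (b * c) := by rw [← hco]; simp only [mul_assoc]
    _ = g i j l * a * (g j k l * b * c) := by
        rw [← Subgroup.mem_center_iff.mp (hc j k l) a]; simp only [mul_assoc]

end CechProduct

theorem stmt_1_general {G : Type*} [Group G] {I : Type*}
    (g : I → I → I → G) (hg₁ : ∀ i j, g i i j = 1) :
    (∀ (i j k l : I) (a b c : G),
        g i k l * (g i j k * a * b) * c = g i j l * a * (g j k l * b * c)) ↔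
      ((∀ i j k : I, g i j k ∈ Subgroup.center G) ∧
       (∀ i j k l : I, g i j l * g j k l = g i k l * g i j k)) :=
  ⟨fun h => ⟨mem_center_of_assoc g hg₁ h, cech_cocycle_of_assoc g h⟩,
    fun ⟨hc, hco⟩ => assoc_of_mem_center_of_cech_cocycle g hc hco⟩

theorem stmt_1 {G : Type*} [Group G] {I : Type*}
    (g : I → I → I → G) (hg₁ : ∀ i j, g i i j = 1) (hg₂ : ∀ i j, g i j j = 1) :
    (∀ (i j k l : I) (a b c : G),
        g i k l * (g i j k * a * b) * c = g i j l * a * (g j k l * b * c)) ↔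
      ((∀ i j k : I, g i j k ∈ Subgroup.center G) ∧
       (∀ i j k l : I, g i j l * g j k l = g i k l * g i j k)) :=
  stmt_1_general g hg₁
end

section
/- Let G be a group and I a type. Let g and g' be two functions assigning to each triple (i,j,k) ∈ I × I × I elements g_{ijk}, g'_{ijk} of the center Z(G), each normalized by g_{iij} = g_{ijj} = 1 (respectively g'_{iij} = g'_{ijj} = 1) and each satisfying the cocycle identity g_{ijl} · g_{jkl} = g_{ikl} · g_{ijk} (respectively for g'). Equip I × I × G with the two products (i,j,a) ·_g (j,k,b) := (i,k, g_{ijk} a b) and (i,j,a) ·_{g'} (j,k,b) := (i,k, g'_{ijk} a b). Then the following are equivalent: (1) there exists a family of bijections ψ_{ij} : G → G with ψ_{ii} = id_G for all i such that the map Φ(i,j,a) := (i,j, ψ_{ij}(a)) intertwines the two products, i.e. Φ((i,j,a) ·_g (j,k,b)) = Φ(i,j,a) ·_{g'} Φ(j,k,b) for all composable pairs; (2) there exists a function h assigning to each pair (i,j) an element h_{ij} ∈ Z(G), with h_{ii} = 1 for all i, such that g_{ijk} · (g'_{ijk})^{-1} = h_{ij} · h_{jk} · h_{ik}^{-1} for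 all i,j,k ∈ I. In particular, the product ·_g is isomorphic in this sense to the trivial product (i,j,a)(j,k,b) = (i,k, ab) if and only if (g_{ijk}) is a Z(G)-valued Čech 2-coboundary. -/
/-!
An intertwiner `ψ` with `ψ i i = id` is pinned down by the instances of its defining identity
with a repeated index: `i = j` forces `ψ i k` to be right multiplication by `c i k := ψ i k 1`,
and then `j = k` forces `c i j` to commute with everything. Evaluating at `a = b = 1` turns the
identity into `g * g'⁻¹ = δc`. Conversely, left multiplication by a central cochain `h` with
`g * g'⁻¹ = δh` is an intertwiner. The untwisted product is the case `g' = 1`.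
-/

namespace CechProduct

variable {G : Type*} [Group G] {I : Type*}

def Intertwines (g g' : I → I → I → G) (ψ : I → I → G ≃ G) : Prop :=
  ∀ (i j k : I) (a b : G), ψ i k (g i j k * a * b) = g' i j k * ψ i j a * ψ j k b

variable {g g' : I → I → I → G} {ψ : I → I → G ≃ G}

theorem Intertwines.apply_eq_mul_apply_one (hψ : Intertwines g g' ψ)
    (hψ₀ : ∀ i, ψ i i = Equiv.refl G) (i k : I) (x : G) : ψ i k x = x * ψ i k 1 := by
  have key : ∀ x, ψ i k x = g' i i k * (g i i k)⁻¹ * x * ψ i k 1 := fun x => by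
    simpa [hψ₀, mul_assoc] using hψ i i k ((g i i k)⁻¹ * x) 1
  have hunit : g' i i k * (g i i k)⁻¹ = 1 := by
    simpa using key 1
  rw [key, hunit, one_mul]

theorem Intertwines.apply_one_mem_center (hψ : Intertwines g g' ψ)
    (hψ₀ : ∀ i, ψ i i = Equiv.refl G) (i j : I) : ψ i j 1 ∈ Subgroup.center G := by
  have key : ∀ b, g i j j * b * ψ i j 1 = g' i j j * ψ i j 1 * b := fun b => by
    simpa [hψ₀, ← hψ.apply_eq_mul_apply_one hψ₀ i j] using hψ i j j 1 b
  have hgg : g i j j = g' i j j := by simpa using key 1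
  refine Subgroup.mem_center_iff.mpr fun b => ?_
  simpa [hgg, mul_assoc] using key b

theorem Intertwines.mul_inv_eq_coboundary (hψ : Intertwines g g' ψ)
    (hψ₀ : ∀ i, ψ i i = Equiv.refl G) (i j k : I) :
    g i j k * (g' i j k)⁻¹ = ψ i j 1 * ψ j k 1 * (ψ i k 1)⁻¹ := by
  set X := ψ i j 1 * ψ j k 1 * (ψ i k 1)⁻¹
  have hX : X ∈ Subgroup.center G := by
    have := hψ.apply_one_mem_center hψ₀
    exact mul_mem (mul_mem (this i j) (this j k)) (inv_mem (this i k))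
  have hg : g i j k = g' i j k * X := by
    have := hψ i j k 1 1
    rw [mul_one, mul_one, hψ.apply_eq_mul_apply_one hψ₀] at this
    rw [eq_mul_inv_of_mul_eq this]
    simp only [X, mul_assoc]
  rw [hg, Subgroup.mem_center_iff.mp hX, mul_inv_cancel_right]

theorem intertwines_mulLeft {h : I → I → G} (hZ : ∀ i j, h i j ∈ Subgroup.center G)
    (hcob : ∀ i j k, g i j k * (g' i j k)⁻¹ = h i j * h j k * (h i k)⁻¹) :
    Intertwines g g' fun i j => Equiv.mulLeft (h i j) := by
  intro i j k a b
  have hcomm : ∀ i j x, x * h i j = h i j * x := fun i j => Subgroup.mem_center_iff.mp (hZ i j)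
  have hg : g i j k = h i j * h j k * (h i k)⁻¹ * g' i j k := eq_mul_of_mul_inv_eq (hcob i j k)
  have hZ₂ : h i j * h j k ∈ Subgroup.center G := mul_mem (hZ i j) (hZ j k)
  simp only [Equiv.coe_mulLeft]
  calc h i k * (g i j k * a * b)
      = (h i j * h j k) * h i k * (h i k)⁻¹ * g' i j k * a * b := by rw [hg, hcomm i k]; group
    _ = g' i j k * (h i j * h j k) * a * b := by
        rw [mul_inv_cancel_right, ← Subgroup.mem_center_iff.mp hZ₂]
    _ = g' i j k * h i j * (h j k * a) * b := by group
    _ = g' i j k * (h i j * a) * (h j k * b) := by rw [← hcomm j k a]; group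

theorem exists_intertwiner_iff_exists_coboundary (g g' : I → I → I → G) :
    (∃ ψ : I → I → G ≃ G, (∀ i, ψ i i = Equiv.refl G) ∧ Intertwines g g' ψ) ↔
      ∃ h : I → I → G, (∀ i j, h i j ∈ Subgroup.center G) ∧ (∀ i, h i i = 1) ∧
        ∀ i j k, g i j k * (g' i j k)⁻¹ = h i j * h j k * (h i k)⁻¹ := by
  constructor
  · rintro ⟨ψ, hψ₀, hψ⟩
    exact ⟨fun i j => ψ i j 1, hψ.apply_one_mem_center hψ₀, fun i => by simp [hψ₀],
      hψ.mul_inv_eq_coboundary hψ₀⟩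
  · rintro ⟨h, hZ, hdiag, hcob⟩
    exact ⟨fun i j => Equiv.mulLeft (h i j), fun i => by ext; simp [hdiag],
      intertwines_mulLeft hZ hcob⟩

end CechProduct

theorem stmt_2_general {G : Type*} [Group G] {I : Type*}
    (g g' : I → I → I → G) :
    ((∃ ψ : I → I → G ≃ G, (∀ i : I, ψ i i = Equiv.refl G) ∧
        ∀ (i j k : I) (a b : G), ψ i k (g i j k * a * b) = g' i j k * ψ i j a * ψ j k b) ↔
      (∃ h : I → I → G, (∀ i j : I, h i j ∈ Subgroup.center G) ∧ (∀ i : I, h i i = 1) ∧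
        ∀ i j k : I, g i j k * (g' i j k)⁻¹ = h i j * h j k * (h i k)⁻¹))
    ∧
    ((∃ ψ : I → I → G ≃ G, (∀ i : I, ψ i i = Equiv.refl G) ∧
        ∀ (i j k : I) (a b : G), ψ i k (g i j k * a * b) = ψ i j a * ψ j k b) ↔
      (∃ h : I → I → G, (∀ i j : I, h i j ∈ Subgroup.center G) ∧ (∀ i : I, h i i = 1) ∧
        ∀ i j k : I, g i j k = h i j * h j k * (h i k)⁻¹)) :=
  ⟨CechProduct.exists_intertwiner_iff_exists_coboundary g g',
    by simpa [CechProduct.Intertwines] using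
      CechProduct.exists_intertwiner_iff_exists_coboundary g fun _ _ _ => 1⟩

theorem stmt_2 {G : Type*} [Group G] {I : Type*}
    (g g' : I → I → I → G)
    (hgZ : ∀ i j k : I, g i j k ∈ Subgroup.center G)
    (hg'Z : ∀ i j k : I, g' i j k ∈ Subgroup.center G)
    (hg₁ : ∀ i j : I, g i i j = 1) (hg₂ : ∀ i j : I, g i j j = 1)
    (hg'₁ : ∀ i j : I, g' i i j = 1) (hg'₂ : ∀ i j : I, g' i j j = 1)
    (hgc : ∀ i j k l : I, g i j l * g j k l = g i k l * g i j k)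
    (hg'c : ∀ i j k l : I, g' i j l * g' j k l = g' i k l * g' i j k) :
    ((∃ ψ : I → I → G ≃ G, (∀ i : I, ψ i i = Equiv.refl G) ∧
        ∀ (i j k : I) (a b : G), ψ i k (g i j k * a * b) = g' i j k * ψ i j a * ψ j k b) ↔
      (∃ h : I → I → G, (∀ i j : I, h i j ∈ Subgroup.center G) ∧ (∀ i : I, h i i = 1) ∧
        ∀ i j k : I, g i j k * (g' i j k)⁻¹ = h i j * h j k * (h i k)⁻¹))
    ∧
    ((∃ ψ : I → I → G ≃ G, (∀ i : I, ψ i i = Equiv.refl G) ∧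
        ∀ (i j k : I) (a b : G), ψ i k (g i j k * a * b) = ψ i j a * ψ j k b) ↔
      (∃ h : I → I → G, (∀ i j : I, h i j ∈ Subgroup.center G) ∧ (∀ i : I, h i i = 1) ∧
        ∀ i j k : I, g i j k = h i j * h j k * (h i k)⁻¹)) :=
  stmt_2_general g g'
end

section
/- Let X be a group and G a normal subgroup of X. The following are equivalent: (a) for every x ∈ X, the automorphism of G given by conjugation g ↦ x g x^{-1} is an inner automorphism of G; (b) there exists a group homomorphism r : X → G/Z(G) such that for every x ∈ X and some (equivalently, every) representative n ∈ G of the coset r(x), one has x g x^{-1} = n g n^{-1} for all g ∈ G; (c) there exists a subgroup X̃ of X such that every element of X̃ commutes with every element of G, X̃ ∩ G = Z(G), and X̃ · G = X. -/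
/-!
Conjugation gives homomorphisms `X → Aut G` and `G → Aut G`; the second has kernel `Z(G)`, so
`G ⧸ Z(G)` is the group of inner automorphisms of `G`. Condition (a) says that the range of the
first lies in the range of the second, which is exactly when the first lifts through
`G ⧸ Z(G)`: this is (b). For (c), `x` acts on `G` as `n ∈ G` does iff `n⁻¹ * x` centralizes `G`,
so (a) says `X = C_X(G) * G`, and `C_X(G) ⊓ G = Z(G)`.
-/

open Subgroup

theorem MulAut.ker_conj (G : Type*) [Group G] :
    (MulAut.conj : G →* MulAut G).ker = center G := by
  ext z
  simp [MonoidHom.mem_ker, MulEquiv.ext_iff, mem_center_iff, eq_mul_inv_iff_mul_eq, eq_comm]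

theorem MulAut.conjNormal_eq_conj_iff {X : Type*} [Group X] {G : Subgroup X} [G.Normal]
    {x : X} {n : G} : conjNormal x = conj n ↔ ∀ g ∈ G, x * g * x⁻¹ = n * g * (n : X)⁻¹ := by
  rw [← conjNormal_val, MulEquiv.ext_iff]
  simp [Subtype.ext_iff, conjNormal_apply]

theorem MulAut.range_conjNormal_le_range_conj_iff {X : Type*} [Group X] {G : Subgroup X}
    [G.Normal] : (conjNormal : X →* MulAut G).range ≤ (conj : G →* MulAut G).range ↔
      ∀ x : X, ∃ n ∈ G, ∀ g ∈ G, x * g * x⁻¹ = n * g * n⁻¹ := by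
  simp only [SetLike.le_def, MonoidHom.mem_range, forall_exists_index, forall_apply_eq_imp_iff,
    eq_comm (a := conj _), conjNormal_eq_conj_iff, Subtype.exists, exists_prop]

theorem MonoidHom.range_le_range_iff_exists_lift {X G A : Type*} [Group X] [Group G] [Group A]
    (φ : X →* A) (ψ : G →* A) (N : Subgroup G) [N.Normal] (hN : ψ.ker = N) :
    φ.range ≤ ψ.range ↔
      ∃ r : X →* G ⧸ N, ∀ x (n : G), (n : G ⧸ N) = r x → φ x = ψ n := by
  subst hN
  constructor
  · intro h
    let e := QuotientGroup.quotientKerEquivRange ψ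
    refine ⟨e.symm.toMonoidHom.comp (φ.codRestrict ψ.range fun x ↦ h ⟨x, rfl⟩), fun x n hn ↦ ?_⟩
    calc φ x = e (e.symm ⟨φ x, h ⟨x, rfl⟩⟩) := by rw [MulEquiv.apply_symm_apply]
      _ = e n := by rw [hn]; rfl
      _ = ψ n := rfl
  · rintro ⟨r, hr⟩ _ ⟨x, rfl⟩
    obtain ⟨n, hn⟩ := QuotientGroup.mk_surjective (r x)
    exact ⟨n, (hr x n hn).symm⟩

theorem Subgroup.inv_mul_mem_centralizer_iff {X : Type*} [Group X] {S : Set X} {x y : X} :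
    y⁻¹ * x ∈ centralizer S ↔ ∀ g ∈ S, x * g * x⁻¹ = y * g * y⁻¹ := by
  refine mem_centralizer_iff.trans (forall₂_congr fun g _ ↦ ?_)
  rw [mul_inv_eq_iff_eq_mul, mul_assoc, ← inv_mul_eq_iff_eq_mul, ← mul_assoc, ← mul_assoc,
    inv_inv, eq_comm]

theorem Subgroup.map_subtype_center {X : Type*} [Group X] (H : Subgroup X) :
    (center H).map H.subtype = centralizer H ⊓ H := by
  ext x
  simp [mem_center_iff, mem_centralizer_iff, Subtype.ext_iff]

theorem Subgroup.exists_conj_eq_iff_exists_mem_centralizer_mul {X : Type*} [Group X]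
    {G : Subgroup X} {x : X} :
    (∃ n ∈ G, ∀ g ∈ G, x * g * x⁻¹ = n * g * n⁻¹) ↔ ∃ a ∈ centralizer G, ∃ n ∈ G, x = a * n := by
  constructor
  · rintro ⟨n, hn, hconj⟩
    have ha : n⁻¹ * x ∈ centralizer G := inv_mul_mem_centralizer_iff.mpr hconj
    refine ⟨n⁻¹ * x, ha, n, hn, ?_⟩
    rw [← mem_centralizer_iff.mp ha n hn, mul_inv_cancel_left]
  · rintro ⟨a, ha, n, hn, rfl⟩
    refine ⟨n, hn, inv_mul_mem_centralizer_iff.mp ?_⟩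
    rwa [← mem_centralizer_iff.mp ha n hn, inv_mul_cancel_left]

theorem stmt_3 {X : Type*} [Group X] (G : Subgroup X) [G.Normal] :
    ((∀ x : X, ∃ n ∈ G, ∀ g ∈ G, x * g * x⁻¹ = n * g * n⁻¹) ↔
      (∃ r : X →* (↥G ⧸ Subgroup.center ↥G),
        ∀ x : X, ∀ n : ↥G, (QuotientGroup.mk n : ↥G ⧸ Subgroup.center ↥G) = r x →
          ∀ g ∈ G, x * g * x⁻¹ = ↑n * g * (↑n : X)⁻¹))
    ∧
    ((∀ x : X, ∃ n ∈ G, ∀ g ∈ G, x * g * x⁻¹ = n * g * n⁻¹) ↔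
      (∃ Xt : Subgroup X,
        (∀ a ∈ Xt, ∀ g ∈ G, a * g = g * a) ∧
        Xt ⊓ G = (Subgroup.center ↥G).map G.subtype ∧
        ∀ x : X, ∃ a ∈ Xt, ∃ g ∈ G, x = a * g)) := by
  refine ⟨?_, ?_⟩
  · rw [← MulAut.range_conjNormal_le_range_conj_iff,
      MonoidHom.range_le_range_iff_exists_lift _ _ _ (MulAut.ker_conj G)]
    simp only [MulAut.conjNormal_eq_conj_iff]
  · simp only [exists_conj_eq_iff_exists_mem_centralizer_mul]
    constructor
    · exact fun h ↦ ⟨centralizer G, fun a ha g hg ↦ (mem_centralizer_iff.mp ha g hg).symm,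
        (map_subtype_center G).symm, h⟩
    · rintro ⟨Xt, hcomm, -, hdecomp⟩ x
      obtain ⟨a, ha, n, hn, rfl⟩ := hdecomp x
      exact ⟨a, mem_centralizer_iff.mpr fun g hg ↦ (hcomm a ha g hg).symm, n, hn, rfl⟩
end

section
/- Let X be a group and G a normal subgroup of X such that for every x ∈ X the conjugation automorphism g ↦ x g x^{-1} of G is an inner automorphism of G. Then Z(G) is a normal subgroup of X, and the canonical surjection π : X/Z(G) → X/G admits a group-homomorphism section σ : X/G → X/Z(G) with π ∘ σ = id. Explicitly, σ(x G) := n_x^{-1} x Z(G), where n_x ∈ G is any element satisfying x g x^{-1} = n_x g n_x^{-1} for all g ∈ G, is well defined (independent of the choices of n_x and of the coset representative x) and is a group homomorphism. -/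
/-!
Let `C` be the centralizer of `G` in `X`. The hypothesis says that every `x` factors as `n * c`
with `n ∈ G` and `c = n⁻¹ * x ∈ C`, so `C` maps onto `X ⧸ G` with kernel `G ⊓ C`, which is exactly
the copy of `Z(G)` in `X`. Hence `X ⧸ G ≃* C ⧸ (G ⊓ C)`, and composing the inverse with the map
`C ⧸ (G ⊓ C) → X ⧸ Z(G)` induced by the inclusion gives the section.
-/

section

open Subgroup

variable {X : Type*} [Group X]

theorem Subgroup.map_subtype_center_eq_inf_centralizer (G : Subgroup X) :
    (center G).map G.subtype = G ⊓ centralizer G := by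
  ext w
  simp only [mem_map, mem_inf, mem_centralizer_iff, mem_center_iff]
  constructor
  · rintro ⟨g, hg, rfl⟩
    exact ⟨g.2, fun h hh => congrArg Subtype.val (hg ⟨h, hh⟩)⟩
  · rintro ⟨hw, hc⟩
    exact ⟨⟨w, hw⟩, fun g => Subtype.ext (hc g g.2), rfl⟩

theorem Subgroup.inv_mul_mem_centralizer_of_conj_eq {S : Set X} {x n : X}
    (h : ∀ g ∈ S, x * g * x⁻¹ = n * g * n⁻¹) : n⁻¹ * x ∈ centralizer S := by
  rw [mem_centralizer_iff]
  intro g hg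
  calc g * (n⁻¹ * x) = n⁻¹ * (n * g * n⁻¹) * x := by group
    _ = n⁻¹ * (x * g * x⁻¹) * x := by rw [h g hg]
    _ = n⁻¹ * x * g := by group

theorem QuotientGroup.mk_inv_mul_of_mem {N : Subgroup X} [N.Normal] {n : X} (hn : n ∈ N)
    (x : X) : ((n⁻¹ * x : X) : X ⧸ N) = x := by
  rw [mk_mul, (eq_one_iff _).mpr (inv_mem hn), one_mul]

theorem QuotientGroup.exists_monoidHom_eq_mk_of_inf_le {G C K : Subgroup X} [G.Normal] [K.Normal]
    (hK : G ⊓ C ≤ K) (hcover : ∀ x : X, ∃ n ∈ G, n⁻¹ * x ∈ C) :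
    ∃ σ : X ⧸ G →* X ⧸ K, ∀ c ∈ C, σ c = c := by
  set φ : C →* X ⧸ G := (mk' G).comp C.subtype
  have hφ : Function.Surjective φ := by
    refine mk_surjective.forall.mpr fun x => ?_
    obtain ⟨n, hn, hc⟩ := hcover x
    exact ⟨⟨n⁻¹ * x, hc⟩, mk_inv_mul_of_mem hn x⟩
  have hker : φ.ker ≤ K.comap C.subtype := fun c hc =>
    hK ⟨(eq_one_iff _).mp hc, c.2⟩
  refine ⟨(map _ _ C.subtype hker).comp
    (quotientKerEquivOfSurjective φ hφ).symm.toMonoidHom, fun c hc => ?_⟩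
  have hsymm : (quotientKerEquivOfSurjective φ hφ).symm c = (⟨c, hc⟩ : C) :=
    (MulEquiv.symm_apply_eq _).mpr rfl
  simp [hsymm]

end

theorem stmt_5 {X : Type*} [Group X] (G : Subgroup X) [G.Normal]
    (hinner : ∀ x : X, ∃ n ∈ G, ∀ g ∈ G, x * g * x⁻¹ = n * g * n⁻¹) :
    ((Subgroup.center ↥G).map G.subtype).Normal ∧
    ∀ [inst : ((Subgroup.center ↥G).map G.subtype).Normal],
      ∃ (π : X ⧸ (Subgroup.center ↥G).map G.subtype →* X ⧸ G)
        (σ : X ⧸ G →* X ⧸ (Subgroup.center ↥G).map G.subtype),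
        (∀ x : X, π (QuotientGroup.mk x) = QuotientGroup.mk x) ∧
        (∀ y : X ⧸ G, π (σ y) = y) ∧
        (∀ x n : X, n ∈ G → (∀ g ∈ G, x * g * x⁻¹ = n * g * n⁻¹) →
          σ (QuotientGroup.mk x) = QuotientGroup.mk (n⁻¹ * x)) := by
  have hZ := G.map_subtype_center_eq_inf_centralizer
  refine ⟨hZ ▸ inferInstance, fun {_} => ?_⟩
  have hcover (x : X) : ∃ n ∈ G, n⁻¹ * x ∈ Subgroup.centralizer G :=
    (hinner x).imp fun n ⟨hn, h⟩ => ⟨hn, Subgroup.inv_mul_mem_centralizer_of_conj_eq h⟩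
  obtain ⟨σ, hσ⟩ := QuotientGroup.exists_monoidHom_eq_mk_of_inf_le hZ.ge hcover
  have hσ_mk {x n : X} (hn : n ∈ G) (hx : n⁻¹ * x ∈ Subgroup.centralizer G) :
      σ x = (n⁻¹ * x : X) := by
    rw [← hσ _ hx, QuotientGroup.mk_inv_mul_of_mem hn]
  refine ⟨QuotientGroup.map _ G (MonoidHom.id X) (hZ ▸ inf_le_left), σ, fun _ => rfl, ?_,
    fun x n hn h => hσ_mk hn (Subgroup.inv_mul_mem_centralizer_of_conj_eq h)⟩
  refine QuotientGroup.mk_surjective.forall.mpr fun x => ?_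
  obtain ⟨n, hn, hx⟩ := hcover x
  rw [hσ_mk hn hx]
  exact QuotientGroup.mk_inv_mul_of_mem hn x
end

section
/- Let G and X̃ be groups, and let j : Z(G) → X̃ be an injective group homomorphism whose image is contained in the center of X̃. Let Δ := {(j(z), z^{-1}) : z ∈ Z(G)} ⊆ X̃ × G. Then: Δ is a central (hence normal) subgroup of X̃ × G; writing X := (X̃ × G)/Δ, the map g ↦ [(1, g)] is an injective group homomorphism from G onto a normal subgroup of X; every element of the form [(x̃, 1)] commutes with every element of this copy of G; the quotient of X by the image of G is canonically isomorphic to X̃ / j(Z(G)); and the conjugation action of every element of X on the copy of G is an inner automorphism of G. In particular, if 1 → Z(G) → X̃ → Y → 1 is a central extension, then 1 → G → (X̃ × G)/Δ → Y → 1 is an extension of Y by G all of whose conjugation automorphisms of G are inner. -/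
/-!
Since `Δ` is central, `(x, h) (1, g) (x, h)⁻¹ = (1, h g h⁻¹)` shows that conjugation by the class
of `(x, h)` acts on the copy of `G` as the inner automorphism of `h`. The first projection descends
to a surjection `(X̃ × G) ⧸ Δ → X̃ ⧸ j(Z(G))` whose kernel is the copy of `G`, because
`(j z, g) ≡ (1, g z)` modulo `Δ`; and the copy of `G` is faithful because `Δ` meets `1 × G`
only where `j z = 1`, i.e. trivially when `j` is injective.
-/

open Function Subgroup QuotientGroup

theorem Subgroup.normal_of_le_center {G : Type*} [Group G] {H : Subgroup G}
    (hH : H ≤ center G) : H.Normal :=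
  ⟨fun n hn g => by rwa [mem_center_iff.mp (hH hn) g, mul_inv_cancel_right]⟩

namespace QuotientGroup

variable {X G : Type*} [Group X] [Group G] (N : Subgroup (X × G)) [N.Normal]

def mkInr : G →* (X × G) ⧸ N := (mk' N).comp (MonoidHom.inr X G)

theorem mkInr_apply (g : G) : mkInr N g = mk (1, g) := rfl

theorem commute_mk_inl_mkInr (x : X) (g : G) : Commute (mk (x, 1) : (X × G) ⧸ N) (mkInr N g) :=
  (Commute.prod (Commute.one_right x) (Commute.one_left g)).map (mk' N)

theorem mk_mul_mkInr_mul_inv (p : X × G) (g : G) :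
    (mk p : (X × G) ⧸ N) * mkInr N g * (mk p)⁻¹ = mkInr N (p.2 * g * p.2⁻¹) := by
  rw [mkInr_apply, mkInr_apply, ← mk_inv, ← mk_mul, ← mk_mul]
  congr 1
  ext <;> simp

theorem exists_conj_mkInr (q : (X × G) ⧸ N) :
    ∃ n : G, ∀ g : G, q * mkInr N g * q⁻¹ = mkInr N (n * g * n⁻¹) := by
  induction q using QuotientGroup.induction_on with
  | H p => exact ⟨p.2, mk_mul_mkInr_mul_inv N p⟩

instance normal_range_mkInr : (mkInr N).range.Normal where
  conj_mem := by
    rintro _ ⟨g, rfl⟩ q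
    obtain ⟨n, hn⟩ := exists_conj_mkInr N q
    exact ⟨n * g * n⁻¹, (hn g).symm⟩

theorem mkInr_injective (h : ∀ g : G, ((1 : X), g) ∈ N → g = 1) : Injective (mkInr N) :=
  (injective_iff_map_eq_one _).mpr fun g hg => h g ((eq_one_iff _).mp hg)

end QuotientGroup

section CentralDiagonal

open scoped IsMulCommutative

variable {G X : Type*} [Group G] [Group X] (j : center G →* X)

def centralDiagonal : Subgroup (X × G) :=
  (j.prod ((center G).subtype.comp invMonoidHom)).range

theorem mem_centralDiagonal {p : X × G} :
    p ∈ centralDiagonal j ↔ ∃ z : center G, p = (j z, (z : G)⁻¹) := by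
  simp [centralDiagonal, eq_comm]

theorem coe_centralDiagonal :
    (centralDiagonal j : Set (X × G)) = {p | ∃ z : center G, p = (j z, (z : G)⁻¹)} :=
  Set.ext fun _ => mem_centralDiagonal j

variable {j}

theorem centralDiagonal_le_center (hjc : ∀ z, j z ∈ center X) :
    centralDiagonal j ≤ center (X × G) := by
  rintro _ ⟨z, rfl⟩
  rw [Subgroup.center_prod]
  exact ⟨hjc z, (center G).inv_mem z.2⟩

theorem eq_one_of_mk_one_mem_centralDiagonal (hj : Injective j) {g : G}
    (h : ((1 : X), g) ∈ centralDiagonal j) : g = 1 := by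
  obtain ⟨z, hz⟩ := (mem_centralDiagonal j).mp h
  obtain ⟨hjz, rfl⟩ := Prod.ext_iff.mp hz
  rw [hj (hjz.symm.trans j.map_one.symm), OneMemClass.coe_one, inv_one]

variable (j) [(centralDiagonal j).Normal] [j.range.Normal]

def fstQuotient : (X × G) ⧸ centralDiagonal j →* X ⧸ j.range :=
  lift _ ((mk' j.range).comp (MonoidHom.fst X G)) <| by
    rintro _ ⟨z, rfl⟩
    exact (eq_one_iff _).mpr ⟨z, rfl⟩

theorem fstQuotient_surjective : Surjective (fstQuotient j) := by
  intro y
  induction y using QuotientGroup.induction_on with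
  | H x => exact ⟨mk (x, 1), rfl⟩

theorem ker_fstQuotient : (fstQuotient j).ker = (mkInr (centralDiagonal j)).range := by
  refine le_antisymm (fun q hq => ?_) ?_
  · induction q using QuotientGroup.induction_on with
    | H p =>
      obtain ⟨z, hz⟩ := (eq_one_iff _).mp hq
      exact ⟨p.2 * z, QuotientGroup.eq.mpr ⟨z, Prod.ext (by simpa using hz) (by simp)⟩⟩
  · rintro _ ⟨g, rfl⟩
    exact (eq_one_iff _).mpr (one_mem _)

noncomputable def quotientRangeMkInrEquiv :
    ((X × G) ⧸ centralDiagonal j) ⧸ (mkInr (centralDiagonal j)).range ≃* X ⧸ j.range :=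
  (quotientMulEquivOfEq (ker_fstQuotient j).symm).trans
    (quotientKerEquivOfSurjective _ (fstQuotient_surjective j))

theorem quotientRangeMkInrEquiv_mk (x : X) (g : G) :
    quotientRangeMkInrEquiv j (mk (mk (x, g))) = mk x := rfl

end CentralDiagonal

theorem stmt_6 {G Xt : Type*} [Group G] [Group Xt]
    (j : ↥(Subgroup.center G) →* Xt) (hj : Function.Injective j)
    (hjc : ∀ z : ↥(Subgroup.center G), j z ∈ Subgroup.center Xt) :
    ∃ Δ : Subgroup (Xt × G),
      (Δ : Set (Xt × G)) = {p | ∃ z : ↥(Subgroup.center G), p = (j z, (↑z : G)⁻¹)} ∧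
      Δ ≤ Subgroup.center (Xt × G) ∧
      Δ.Normal ∧
      j.range.Normal ∧
      ∀ [instΔ : Δ.Normal],
        ∀ ι : G →* (Xt × G) ⧸ Δ,
          (∀ g : G, ι g = QuotientGroup.mk (1, g)) →
          Function.Injective ι ∧
          ι.range.Normal ∧
          (∀ (x : Xt) (g : G),
            Commute (QuotientGroup.mk (x, 1) : (Xt × G) ⧸ Δ) (ι g)) ∧
          (∀ [instR : ι.range.Normal] [instJ : j.range.Normal],
            ∃ e : (((Xt × G) ⧸ Δ) ⧸ ι.range) ≃* (Xt ⧸ j.range),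
              ∀ (x : Xt) (g : G),
                e (QuotientGroup.mk (QuotientGroup.mk (x, g))) = QuotientGroup.mk x) ∧
          (∀ q : (Xt × G) ⧸ Δ, ∃ n : G, ∀ g : G, q * ι g * q⁻¹ = ι (n * g * n⁻¹)) := by
  have hΔ : centralDiagonal j ≤ center (Xt × G) := centralDiagonal_le_center hjc
  have hjr : j.range ≤ center Xt := by
    rintro _ ⟨z, rfl⟩
    exact hjc z
  refine ⟨centralDiagonal j, coe_centralDiagonal j, hΔ, normal_of_le_center hΔ,
    normal_of_le_center hjr, fun ι hι => ?_⟩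
  obtain rfl : ι = mkInr (centralDiagonal j) := MonoidHom.ext hι
  exact ⟨mkInr_injective _ fun _ => eq_one_of_mk_one_mem_centralDiagonal hj, inferInstance,
    commute_mk_inl_mkInr _, ⟨quotientRangeMkInrEquiv j, quotientRangeMkInrEquiv_mk j⟩,
    exists_conj_mkInr _⟩
end
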